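/- arXiv:1409.7854 — 2 statements merged into one kernel-verified Lean document; each statement's English description precedes it below -/
import Mathlib

section
/- For γ > 1 and any fixed ρ̄ > 0, there exists a constant c₁ = c₁(ρ̄, γ) > 0 such that for all ρ ≥ 0, h(ρ) - h(ρ̄) - h'(ρ̄)(ρ - ρ̄) ≥ c₁ ρ (ρ^θ - ρ̄^θ)², where θ = (γ-1)/2 and h(ρ) = κ ρ^γ/(γ-1) with κ > 0. -/
/-!
With `A = ρ^θ` and `B = ρ̄^θ` one has `ρ^γ = A²ρ` and `ρ̄^(γ-1) = B²`, and the difference between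
`ρ^γ - ρ̄^γ - γ ρ̄^(γ-1) (ρ - ρ̄)` and `ρ (A - B)²` equals `2B` times the gap between
`x ↦ x^(θ+1)` and its tangent line at `ρ̄`, evaluated at `ρ`. That gap is nonnegative by convexity
(Bernoulli's inequality), so the relative energy is at least `κ/(γ-1) · ρ (ρ^θ - ρ̄^θ)²`.
-/

namespace Real

theorem rpow_ge_tangent {p b x : ℝ} (hp : 1 ≤ p) (hb : 0 < b) (hx : 0 ≤ x) :
    b ^ p + p * b ^ (p - 1) * (x - b) ≤ x ^ p := by
  have bernoulli : 1 + p * (x / b - 1) ≤ (x / b) ^ p := by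
    simpa using one_add_mul_self_le_rpow_one_add (s := x / b - 1)
      (by linarith [div_nonneg hx hb.le]) hp
  have hbp : b ^ p = b ^ (p - 1) * b := by rw [rpow_sub_one hb.ne']; field_simp
  calc b ^ p + p * b ^ (p - 1) * (x - b) = b ^ p * (1 + p * (x / b - 1)) := by
        rw [hbp]; field_simp
    _ ≤ b ^ p * (x / b) ^ p := by gcongr
    _ = x ^ p := by rw [div_rpow hx hb.le, mul_div_cancel₀ _ (rpow_pos_of_pos hb p).ne']

theorem rpow_sub_tangent_ge_mul_sq {γ ρ ρb : ℝ} (hγ : 1 ≤ γ) (hρ : 0 ≤ ρ) (hρb : 0 < ρb) :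
    ρ * (ρ ^ ((γ - 1) / 2) - ρb ^ ((γ - 1) / 2)) ^ 2
      ≤ ρ ^ γ - ρb ^ γ - γ * ρb ^ (γ - 1) * (ρ - ρb) := by
  set θ := (γ - 1) / 2 with hθ
  have sq_rpow : ∀ x : ℝ, 0 ≤ x → x ^ (γ - 1) = (x ^ θ) ^ 2 := fun x hx => by
    rw [← rpow_natCast, ← rpow_mul hx, hθ]; norm_num
  have rpow_γ : ∀ x : ℝ, 0 ≤ x → x ^ γ = (x ^ θ) ^ 2 * x := fun x hx => by
    rw [← sq_rpow x hx, ← rpow_add_one' hx (by linarith)]; ring_nf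
  have rpow_θ_add_one : ∀ x : ℝ, 0 ≤ x → x ^ (θ + 1) = x ^ θ * x := fun x hx =>
    rpow_add_one' hx (by linarith)
  have tangent := rpow_ge_tangent (p := θ + 1) (by linarith) hρb hρ
  rw [add_sub_cancel_right, rpow_θ_add_one ρb hρb.le, rpow_θ_add_one ρ hρ] at tangent
  rw [rpow_γ ρ hρ, rpow_γ ρb hρb.le, sq_rpow ρb hρb.le, show γ = 2 * θ + 1 by rw [hθ]; ring]
  nlinarith [mul_nonneg (rpow_nonneg hρb.le θ) (sub_nonneg.2 tangent)]

end Real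

/-- Relative internal energy lower bound: for `h(ρ) = κ ρ^γ/(γ-1)`, `θ = (γ-1)/2`,
`h(ρ) - h(ρ̄) - h'(ρ̄)(ρ - ρ̄) ≥ c₁ ρ (ρ^θ - ρ̄^θ)²`. -/
theorem stmt0 (γ κ ρb : ℝ) (hγ : 1 < γ) (hκ : 0 < κ) (hρb : 0 < ρb) :
    ∃ c₁ > 0, ∀ ρ : ℝ, 0 ≤ ρ →
      κ * ρ ^ γ / (γ - 1) - κ * ρb ^ γ / (γ - 1)
          - (κ * γ * ρb ^ (γ - 1) / (γ - 1)) * (ρ - ρb)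
        ≥ c₁ * ρ * (ρ ^ ((γ - 1) / 2) - ρb ^ ((γ - 1) / 2)) ^ 2 := by
  have hc : 0 < κ / (γ - 1) := div_pos hκ (sub_pos.2 hγ)
  refine ⟨κ / (γ - 1), hc, fun ρ hρ => ?_⟩
  have key := Real.rpow_sub_tangent_ge_mul_sq hγ.le hρ hρb
  calc κ * ρ ^ γ / (γ - 1) - κ * ρb ^ γ / (γ - 1) - (κ * γ * ρb ^ (γ - 1) / (γ - 1)) * (ρ - ρb)
      = κ / (γ - 1) * (ρ ^ γ - ρb ^ γ - γ * ρb ^ (γ - 1) * (ρ - ρb)) := by ring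
    _ ≥ κ / (γ - 1) * (ρ * (ρ ^ ((γ - 1) / 2) - ρb ^ ((γ - 1) / 2)) ^ 2) := by gcongr
    _ = κ / (γ - 1) * ρ * (ρ ^ ((γ - 1) / 2) - ρb ^ ((γ - 1) / 2)) ^ 2 := by ring
end

section
/- For γ > 1, κ = (γ-1)²/(4γ), θ = (γ-1)/2, the Riemann invariant w(ρ, m) = m/ρ + ρ^θ/θ · θ = m/ρ + ρ^θ, considered as a function of (ρ, m) on {ρ > 0}, is quasi-convex in the sense that ∇^⊥w · ∇²w · (∇^⊥w)^T ≥ 0, where ∇^⊥ = (∂_m, −∂_ρ); similarly z(ρ, m) = m/ρ − ρ^θ satisfies −∇^⊥z · ∇²z · (∇^⊥z)^T ≥ 0. -/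
/-- `∂²_{ρρ}` of a function of two variables. -/
noncomputable def hess11 (f : ℝ → ℝ → ℝ) (ρ m : ℝ) : ℝ :=
  deriv (fun r : ℝ => deriv (fun r' : ℝ => f r' m) r) ρ

/-- `∂²_{ρm}` of a function of two variables. -/
noncomputable def hess12 (f : ℝ → ℝ → ℝ) (ρ m : ℝ) : ℝ :=
  deriv (fun r : ℝ => deriv (fun mm : ℝ => f r mm) m) ρ

/-- `∂²_{mm}` of a function of two variables. -/
noncomputable def hess22 (f : ℝ → ℝ → ℝ) (ρ m : ℝ) : ℝ :=
  deriv (fun mm : ℝ => deriv (fun mm' : ℝ => f ρ mm') mm) m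

/-- Hessian quadratic form `v ∇²f vᵀ`. -/
noncomputable def hessQuad (f : ℝ → ℝ → ℝ) (ρ m v₁ v₂ : ℝ) : ℝ :=
  v₁ ^ 2 * hess11 f ρ m + 2 * v₁ * v₂ * hess12 f ρ m + v₂ ^ 2 * hess22 f ρ m

/-!
For `f ρ m = m / ρ + g ρ` one has `∂²_{mm} f = 0` and `∂²_{ρm} f = -1/ρ²`, and along
`∇^⊥f = (1/ρ, m/ρ² - g')` the terms containing `m` cancel, leaving
`(ρ g'' + 2 g') / ρ³ = (ρ² g')' / ρ⁴`. For `g = ±ρ^θ` this is `±θ(θ+1) ρ^(θ-4)`, whose sign is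
that of `±1` when `θ > 0`.
-/

open Filter Topology

noncomputable def perpHessQuad (f : ℝ → ℝ → ℝ) (ρ m : ℝ) : ℝ :=
  hessQuad f ρ m (deriv (f ρ) m) (-deriv (fun r => f r m) ρ)

section DivAdd

variable {g : ℝ → ℝ} {ρ : ℝ}

lemma hasDerivAt_div_add (m : ℝ) {g' : ℝ} (hg : HasDerivAt g g' ρ) (hρ : ρ ≠ 0) :
    HasDerivAt (fun r => m / r + g r) (-m / ρ ^ 2 + g') ρ := by
  have hinv := (hasDerivAt_inv hρ).const_mul m
  simp only [← div_eq_mul_inv, mul_neg, ← neg_div] at hinv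
  exact hinv.fun_add hg

lemma deriv_div_add_const (a c x : ℝ) : deriv (fun y => y / a + c) x = a⁻¹ := by
  simp

lemma hess22_div_add (m : ℝ) : hess22 (fun r mm => mm / r + g r) ρ m = 0 := by
  simp only [hess22, deriv_div_add_const, deriv_const]

lemma hess12_div_add (m : ℝ) : hess12 (fun r mm => mm / r + g r) ρ m = -(ρ ^ 2)⁻¹ := by
  simp only [hess12, deriv_div_add_const, deriv_inv]

lemma hess11_div_add (m : ℝ) {g' : ℝ → ℝ} {g'' : ℝ}
    (hg : ∀ᶠ r in 𝓝 ρ, HasDerivAt g (g' r) r) (hg' : HasDerivAt g' g'' ρ) (hρ : ρ ≠ 0) :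
    hess11 (fun r mm => mm / r + g r) ρ m = 2 * m / ρ ^ 3 + g'' := by
  have hfirst : (fun r => deriv (fun r' => m / r' + g r') r) =ᶠ[𝓝 ρ]
      fun r => -m / r ^ 2 + g' r := by
    filter_upwards [hg, eventually_ne_nhds hρ] with r hgr hr
    exact (hasDerivAt_div_add m hgr hr).deriv
  have hsecond : HasDerivAt (fun r => -m / r ^ 2 + g' r) (2 * m / ρ ^ 3 + g'') ρ := by
    have h := (hasDerivAt_const ρ (-m)).fun_div (hasDerivAt_pow 2 ρ) (pow_ne_zero 2 hρ)
    refine (h.fun_add hg').congr_deriv ?_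
    norm_num
    field_simp
  rw [hess11, hfirst.deriv_eq, hsecond.deriv]

lemma perpHessQuad_div_add (m : ℝ) {g' : ℝ → ℝ} {g'' : ℝ}
    (hg : ∀ᶠ r in 𝓝 ρ, HasDerivAt g (g' r) r) (hg' : HasDerivAt g' g'' ρ) (hρ : ρ ≠ 0) :
    perpHessQuad (fun r mm => mm / r + g r) ρ m = (ρ * g'' + 2 * g' ρ) / ρ ^ 3 := by
  have hv₁ : deriv (fun mm => mm / ρ + g ρ) m = ρ⁻¹ := deriv_div_add_const ρ (g ρ) m
  have hv₂ : deriv (fun r => m / r + g r) ρ = -m / ρ ^ 2 + g' ρ :=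
    (hasDerivAt_div_add m hg.self_of_nhds hρ).deriv
  rw [perpHessQuad, hessQuad, hv₁, hv₂, hess11_div_add m hg hg' hρ, hess12_div_add,
    hess22_div_add]
  field_simp
  ring

end DivAdd

lemma perpHessQuad_div_add_const_mul_rpow (ε t m : ℝ) {ρ : ℝ} (hρ : 0 < ρ) :
    perpHessQuad (fun r mm => mm / r + ε * r ^ t) ρ m =
      ε * (t * (t + 1) * ρ ^ (t - 1)) / ρ ^ 3 := by
  have hg : ∀ᶠ r in 𝓝 ρ, HasDerivAt (fun r => ε * r ^ t) (ε * (t * r ^ (t - 1))) r := by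
    filter_upwards [eventually_ne_nhds hρ.ne'] with r hr
    exact (Real.hasDerivAt_rpow_const (Or.inl hr)).const_mul ε
  have hg' : HasDerivAt (fun r => ε * (t * r ^ (t - 1)))
      (ε * (t * ((t - 1) * ρ ^ (t - 1 - 1)))) ρ :=
    ((Real.hasDerivAt_rpow_const (Or.inl hρ.ne')).const_mul t).const_mul ε
  rw [perpHessQuad_div_add m hg hg' hρ.ne']
  have hpow : ρ ^ (t - 1) = ρ * ρ ^ (t - 1 - 1) := by
    rw [Real.rpow_sub_one hρ.ne' (t - 1)]
    field_simp
  rw [hpow]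
  ring

/-- Quasi-convexity of the Riemann invariants `w = m/ρ + ρ^θ`, `z = m/ρ - ρ^θ`:
`∇^⊥w ∇²w (∇^⊥w)ᵀ ≥ 0` and `-∇^⊥z ∇²z (∇^⊥z)ᵀ ≥ 0`, where `∇^⊥ = (∂_m, -∂_ρ)`. -/
theorem stmt7 (γ : ℝ) (hγ : 1 < γ) (ρ m : ℝ) (hρ : 0 < ρ) :
    (0 ≤ hessQuad (fun r mm => mm / r + r ^ ((γ - 1) / 2)) ρ m
        (deriv (fun mm : ℝ => mm / ρ + ρ ^ ((γ - 1) / 2)) m)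
        (-(deriv (fun r : ℝ => m / r + r ^ ((γ - 1) / 2)) ρ)))
    ∧ (0 ≤ -(hessQuad (fun r mm => mm / r - r ^ ((γ - 1) / 2)) ρ m
        (deriv (fun mm : ℝ => mm / ρ - ρ ^ ((γ - 1) / 2)) m)
        (-(deriv (fun r : ℝ => m / r - r ^ ((γ - 1) / 2)) ρ)))) := by
  have hθ : 0 < (γ - 1) / 2 := by linarith
  have hw := perpHessQuad_div_add_const_mul_rpow 1 ((γ - 1) / 2) m hρ
  have hz := perpHessQuad_div_add_const_mul_rpow (-1) ((γ - 1) / 2) m hρ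
  simp only [one_mul] at hw
  simp only [neg_one_mul, ← sub_eq_add_neg] at hz
  rw [perpHessQuad] at hw hz
  rw [hw, hz, neg_div, neg_neg]
  constructor <;> positivity
end
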